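/- For any ε-fraction overlap: if two translated octahedra C₃ + x, C₃ + x' in ℝ³ have cross sections at height z₀ that are squares of edge lengths l, l' ∈ [√2/27, 53√2/27] with one square containing a vertex of the other, and the cross sections of one shrink while the other's grow as z increases, in the full-containment configuration, then vol((C₃+x) ∩ (C₃+x')) ≥ 4/3¹⁰. -/

import Mathlib

open Set Pointwise MeasureTheory ENNReal

/-- The regular octahedron `C₃` (the ℓ¹-ball of radius 2 in ℝ³). -/
def C₃ : Set (Fin 3 → ℝ) := {p | |p 0| + |p 1| + |p 2| ≤ 2}

/-- The square cross section of the translate `C₃ + x` at height `z₀`,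
viewed in the `(u,v)`-plane. -/
def crossSection (x : Fin 3 → ℝ) (z₀ : ℝ) : Set (ℝ × ℝ) :=
  {uv | |uv.1 - x 0| + |uv.2 - x 1| ≤ 2 - |z₀ - x 2|}

/-!
Let `r ≥ 1/27` and `r'` be the ℓ¹-radii of the two cross sections at height `z₀`. Containment of
the squares forces the ℓ¹-distance of their centres to be at most `r' - r`. Hence the ℓ¹-ball of
radius `r` about the point of `C₃ + x` at height `z₀` above the centre `(x₀, x₁)` lies in both
octahedra, by the triangle inequality. Its volume is `(4/3) r³ ≥ (4/3) (1/27)³ = 4/3¹⁰`.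
-/

section L1Ball

variable {ι : Type*} [Fintype ι]

def l1ClosedBall (c : ι → ℝ) (r : ℝ) : Set (ι → ℝ) := {p | ∑ i, |p i - c i| ≤ r}

theorem l1ClosedBall_eq_vadd (c : ι → ℝ) (r : ℝ) :
    l1ClosedBall c r = c +ᵥ {p : ι → ℝ | ∑ i, |p i| ≤ r} := by
  ext p
  simp [l1ClosedBall, mem_vadd_set_iff_neg_vadd_mem, neg_add_eq_sub]

theorem volume_l1ClosedBall [Nonempty ι] (c : ι → ℝ) (r : ℝ) :
    volume (l1ClosedBall c r) =
      ENNReal.ofReal r ^ Fintype.card ι *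
        ENNReal.ofReal (2 ^ Fintype.card ι / (Fintype.card ι).factorial) := by
  have h := volume_sum_rpow_le ι (p := 1) le_rfl r
  simp only [Real.rpow_one, div_one, one_add_one_eq_two, Real.Gamma_two, mul_one] at h
  rw [l1ClosedBall_eq_vadd, measure_vadd, h, Real.Gamma_nat_eq_factorial]

theorem l1ClosedBall_subset_l1ClosedBall {c c' : ι → ℝ} {r r' : ℝ}
    (h : ∑ i, |c i - c' i| + r ≤ r') : l1ClosedBall c r ⊆ l1ClosedBall c' r' := by
  intro p hp
  calc ∑ i, |p i - c' i| ≤ ∑ i, (|p i - c i| + |c i - c' i|) :=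
        Finset.sum_le_sum fun i _ => abs_sub_le _ _ _
    _ ≤ r' := by rw [Finset.sum_add_distrib]; linarith [show ∑ i, |p i - c i| ≤ r from hp]

end L1Ball

theorem vadd_C₃ (x : Fin 3 → ℝ) : x +ᵥ C₃ = l1ClosedBall x 2 := by
  rw [l1ClosedBall_eq_vadd]
  simp [C₃, Fin.sum_univ_three]

theorem abs_sub_add_abs_sub_add_le_of_diamond_subset {a b a' b' r r' : ℝ} (hr : 0 ≤ r)
    (h : {uv : ℝ × ℝ | |uv.1 - a| + |uv.2 - b| ≤ r} ⊆
      {uv : ℝ × ℝ | |uv.1 - a'| + |uv.2 - b'| ≤ r'}) :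
    |a - a'| + |b - b'| + r ≤ r' := by
  rcases le_total a' a with ha | ha
  · have := @h (a + r, b) (by simp [abs_of_nonneg hr])
    simp only [mem_ofPred_eq] at this
    rw [abs_of_nonneg (by linarith : 0 ≤ a + r - a')] at this
    rw [abs_of_nonneg (sub_nonneg.2 ha)]
    linarith
  · have := @h (a - r, b) (by simp [abs_of_nonneg hr])
    simp only [mem_ofPred_eq] at this
    rw [abs_of_nonpos (by linarith : a - r - a' ≤ 0)] at this
    rw [abs_of_nonpos (sub_nonpos.2 ha)]
    linarith

theorem opposite_sign_containment_overlap_general (x x' : Fin 3 → ℝ) (z₀ : ℝ)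
    (hlo : Real.sqrt 2 / 27 ≤ Real.sqrt 2 * (2 - |z₀ - x 2|))
    (hcontained : crossSection x z₀ ⊆ crossSection x' z₀) :
    ENNReal.ofReal (4 / 3 ^ 10) ≤ volume ((x +ᵥ C₃) ∩ (x' +ᵥ C₃)) := by
  set r := 2 - |z₀ - x 2|
  have hr : 1 / 27 ≤ r :=
    le_of_mul_le_mul_left (by linarith) (by positivity : 0 < Real.sqrt 2)
  have hcentres := abs_sub_add_abs_sub_add_le_of_diamond_subset (by linarith) hcontained
  set c : Fin 3 → ℝ := ![x 0, x 1, z₀]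
  have hsub : l1ClosedBall c r ⊆ (x +ᵥ C₃) ∩ (x' +ᵥ C₃) := by
    rw [vadd_C₃, vadd_C₃]
    refine subset_inter (l1ClosedBall_subset_l1ClosedBall ?_)
      (l1ClosedBall_subset_l1ClosedBall ?_) <;>
    simp only [Fin.sum_univ_three, c, Matrix.cons_val_zero, Matrix.cons_val_one,
      Matrix.cons_val_two, Matrix.head_cons, Matrix.tail_cons, sub_self, abs_zero] <;>
    linarith
  calc ENNReal.ofReal (4 / 3 ^ 10)
      = ENNReal.ofReal (1 / 27) ^ 3 * ENNReal.ofReal (2 ^ 3 / (3 : ℕ).factorial) := by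
        rw [← ENNReal.ofReal_pow (by norm_num), ← ENNReal.ofReal_mul (by norm_num)]
        norm_num [Nat.factorial]
    _ ≤ ENNReal.ofReal r ^ 3 * ENNReal.ofReal (2 ^ 3 / (3 : ℕ).factorial) := by gcongr
    _ = volume (l1ClosedBall c r) := by rw [volume_l1ClosedBall, Fintype.card_fin]
    _ ≤ volume ((x +ᵥ C₃) ∩ (x' +ᵥ C₃)) := measure_mono hsub

/-- Opposite signs, full-containment configuration: the cross sections of
`C₃ + x` and `C₃ + x'` at height `z₀` are squares with edge lengths in
`[√2/27, 53√2/27]`; the sections of `C₃ + x` grow as `z` increases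
(`δ = +1`, i.e. `z₀ ∈ [x₃-2, x₃]`) while those of `C₃ + x'` shrink
(`δ = -1`, i.e. `z₀ ∈ (x'₃, x'₃+2]`), and the square of `C₃ + x` is fully
contained in that of `C₃ + x'`. Then `vol((C₃+x) ∩ (C₃+x')) ≥ 4/3¹⁰`. -/
theorem opposite_sign_containment_overlap (x x' : Fin 3 → ℝ) (z₀ : ℝ)
    (hδ : z₀ ∈ Icc (x 2 - 2) (x 2)) (hδ' : z₀ ∈ Ioc (x' 2) (x' 2 + 2))
    (hlo : Real.sqrt 2 / 27 ≤ Real.sqrt 2 * (2 - |z₀ - x 2|))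
    (hhi : Real.sqrt 2 * (2 - |z₀ - x 2|) ≤ 53 * Real.sqrt 2 / 27)
    (hlo' : Real.sqrt 2 / 27 ≤ Real.sqrt 2 * (2 - |z₀ - x' 2|))
    (hhi' : Real.sqrt 2 * (2 - |z₀ - x' 2|) ≤ 53 * Real.sqrt 2 / 27)
    (hcontained : crossSection x z₀ ⊆ crossSection x' z₀) :
    ENNReal.ofReal (4 / 3 ^ 10) ≤ volume ((x +ᵥ C₃) ∩ (x' +ᵥ C₃)) :=
  opposite_sign_containment_overlap_general x x' z₀ hlo hcontained
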